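/- In a D-regular graph with best-response function φ(y) = (α/τ)·W((τ^{(α+1)/α}/α)·exp(-τy/α)), the common value y = (α/(τ(1+D)))·W((τ^{(α+1)/α}/α)·(1+D)) is a symmetric Nash equilibrium: it satisfies y = φ(D·y). -/

import Mathlib

/-- The Lambert W function on `[0,∞)`: the inverse of `x ↦ x * exp x` on `[0,∞)`. -/
noncomputable def lambertW (x : ℝ) : ℝ :=
  Function.invFunOn (fun t => t * Real.exp t) (Set.Ici 0) x

/-!
Write `K = τ^((α+1)/α)/α`, `s = 1 + D` and `w = W (K s)`, so that `y = α w / (τ s)` and the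
exponent `-τ D y / α` equals `w/s - w`. Dividing `w e^w = K s` by `s` gives
`K e^(w/s - w) = (w/s) e^(w/s)`, hence `W (K e^(-τ D y / α)) = w/s` and `φ(D y) = α w / (τ s) = y`.
-/

open Real Set

lemma strictMonoOn_mul_exp : StrictMonoOn (fun t : ℝ => t * exp t) (Ici 0) := by
  intro a ha b hb hab
  calc a * exp a < b * exp a := mul_lt_mul_of_pos_right hab (exp_pos a)
    _ ≤ b * exp b := mul_le_mul_of_nonneg_left (exp_le_exp.mpr hab.le) hb

lemma exists_mul_exp_eq {x : ℝ} (hx : 0 ≤ x) : ∃ t ∈ Ici (0 : ℝ), t * exp t = x := by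
  have hmem : x ∈ Icc ((0 : ℝ) * exp 0) (x * exp x) :=
    ⟨by simpa using hx, le_mul_of_one_le_right hx (one_le_exp hx)⟩
  obtain ⟨t, ht, hxt⟩ :=
    intermediate_value_Icc hx (continuous_id.mul continuous_exp).continuousOn hmem
  exact ⟨t, ht.1, hxt⟩

lemma lambertW_nonneg {x : ℝ} (hx : 0 ≤ x) : 0 ≤ lambertW x :=
  Function.invFunOn_mem (exists_mul_exp_eq hx)

lemma lambertW_mul_exp_self {x : ℝ} (hx : 0 ≤ x) : lambertW x * exp (lambertW x) = x :=
  Function.invFunOn_eq (exists_mul_exp_eq hx)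

lemma lambertW_mul_exp {x : ℝ} (hx : 0 ≤ x) : lambertW (x * exp x) = x := by
  have hxe : 0 ≤ x * exp x := mul_nonneg hx (exp_pos x).le
  exact strictMonoOn_mul_exp.injOn (lambertW_nonneg hxe) hx (lambertW_mul_exp_self hxe)

lemma lambertW_mul_exp_div_sub {K s : ℝ} (hK : 0 ≤ K) (hs : 0 < s) :
    lambertW (K * exp (lambertW (K * s) / s - lambertW (K * s))) = lambertW (K * s) / s := by
  set w := lambertW (K * s)
  have hKs : 0 ≤ K * s := mul_nonneg hK hs.le
  have hK_eq : K = w * exp w / s := by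
    rw [lambertW_mul_exp_self hKs]; field_simp
  have harg : K * exp (w / s - w) = w / s * exp (w / s) := by
    rw [hK_eq, exp_sub]; field_simp
  rw [harg, lambertW_mul_exp (div_nonneg (lambertW_nonneg hKs) hs.le)]

/-- In a D-regular graph, the common value
`y = (α/(τ(1+D))) W((τ^((α+1)/α)/α)(1+D))` is a symmetric Nash equilibrium:
it satisfies `y = φ(D·y)` where `φ` is the best-response function. -/
theorem symmetric_nash_equilibrium (τ α : ℝ) (hτ : 0 < τ) (hα : 0 < α) (D : ℕ) :
    let y : ℝ := (α / (τ * (1 + (D : ℝ)))) * lambertW ((τ ^ ((α + 1) / α) / α) * (1 + (D : ℝ)))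
    y = (α / τ) * lambertW ((τ ^ ((α + 1) / α) / α) * Real.exp (-τ * ((D : ℝ) * y) / α)) := by
  intro y
  set K := τ ^ ((α + 1) / α) / α
  set s : ℝ := 1 + D
  set w := lambertW (K * s)
  have hs : 0 < s := by positivity
  have hK : 0 ≤ K := div_nonneg (rpow_nonneg hτ.le _) hα.le
  have hy : y = α / (τ * s) * w := rfl
  have hexponent : -τ * (D * y) / α = w / s - w := by
    rw [hy]; field_simp; ring
  have hW : lambertW (K * exp (w / s - w)) = w / s := lambertW_mul_exp_div_sub hK hs
  rw [hexponent, hW, hy]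
  field_simp
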